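/- arXiv:1907.01200 — 3 statements merged into one kernel-verified Lean document; each statement's English description precedes it below -/
import Mathlib

section
/- Let A = diag(λ₁,...,λₙ) with 1 = λ₁ ≤ ... ≤ λₙ, and let g ∈ ℝⁿ with components g_i. Fix μ ∈ {1,...,n−1} and ε > 0. If Σ_{i=1}^{μ} g_i² ≤ ε and g_{μ+1}² ≥ 2ε, then the Rayleigh quotient satisfies (gᵀAg)/(gᵀg) ≥ (2/3)·λ_{μ+1}. -/
/-! Split `g` into its first `μ` coordinates and the rest. The tail has mass at least `2ε`, hence
at least twice the mass of the head, so `gᵀg` is at most `3/2` times the tail mass; on the tail the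
eigenvalues are at least `λ_{μ+1}`, and on the head they are nonnegative, so `gᵀAg` is at least
`λ_{μ+1}` times the tail mass. -/

open Matrix Finset

theorem dotProduct_self_eq_sum_sq {ι R : Type*} [Fintype ι] [CommSemiring R] (v : ι → R) :
    v ⬝ᵥ v = ∑ i, v i ^ 2 := by
  simp only [dotProduct, sq]

theorem dotProduct_diagonal_mulVec_self {ι R : Type*} [Fintype ι] [DecidableEq ι] [CommSemiring R]
    (d v : ι → R) : v ⬝ᵥ diagonal d *ᵥ v = ∑ i, d i * v i ^ 2 := by
  simp only [dotProduct, mulVec_diagonal]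
  exact sum_congr rfl fun i _ => by ring

theorem mul_sum_filter_not_le_sum_mul {ι : Type*} (s : Finset ι) (p : ι → Prop) [DecidablePred p]
    {lam x : ι → ℝ} {L : ℝ} (hx : ∀ i ∈ s, 0 ≤ x i) (hp : ∀ i ∈ s, p i → 0 ≤ lam i)
    (hnp : ∀ i ∈ s, ¬ p i → L ≤ lam i) :
    L * ∑ i ∈ s with ¬ p i, x i ≤ ∑ i ∈ s, lam i * x i := by
  rw [← sum_filter_add_sum_filter_not s p, mul_sum]
  refine le_add_of_nonneg_of_le (sum_nonneg fun i hi => ?_) (sum_le_sum fun i hi => ?_)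
  · rw [mem_filter] at hi
    exact mul_nonneg (hp i hi.1 hi.2) (hx i hi.1)
  · rw [mem_filter] at hi
    exact mul_le_mul_of_nonneg_right (hnp i hi.1 hi.2) (hx i hi.1)

theorem two_thirds_mul_le_div {a b L N : ℝ} (ha : 0 ≤ a) (hab : 2 * a ≤ b) (hb : 0 < b)
    (hL : 0 ≤ L) (hN : L * b ≤ N) : 2 / 3 * L ≤ N / (a + b) := by
  rw [le_div_iff₀ (by linarith)]
  nlinarith

theorem rayleigh_lower_bound_general {n : ℕ} (lam : Fin n → ℝ)
    (hmono : Monotone lam) (hn : 0 < n) (h1 : lam ⟨0, hn⟩ = 1)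
    (g : Fin n → ℝ) (μ : ℕ) (hμn : μ < n) (ε : ℝ) (hε : 0 < ε)
    (hsum : ∑ i ∈ Finset.univ.filter (fun i : Fin n => (i : ℕ) < μ), g i ^ 2 ≤ ε)
    (hbig : g ⟨μ, hμn⟩ ^ 2 ≥ 2 * ε) :
    (g ⬝ᵥ (Matrix.diagonal lam).mulVec g) / (g ⬝ᵥ g) ≥ 2 / 3 * lam ⟨μ, hμn⟩ := by
  have one_le_lam : ∀ i, 1 ≤ lam i := fun i => h1 ▸ hmono (Nat.zero_le i)
  have htail : 2 * ε ≤ ∑ i ∈ univ.filter (fun i : Fin n => ¬ (i : ℕ) < μ), g i ^ 2 :=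
    hbig.trans (single_le_sum (fun i _ => sq_nonneg (g i)) (by simp))
  rw [dotProduct_diagonal_mulVec_self, dotProduct_self_eq_sum_sq,
    ← sum_filter_add_sum_filter_not univ (fun i : Fin n => (i : ℕ) < μ) (fun i => g i ^ 2),
    ge_iff_le]
  apply two_thirds_mul_le_div (sum_nonneg fun i _ => sq_nonneg (g i)) (by linarith) (by linarith)
    (zero_le_one.trans (one_le_lam _))
  refine mul_sum_filter_not_le_sum_mul _ _ (fun i _ => sq_nonneg (g i))
    (fun i _ _ => zero_le_one.trans (one_le_lam i)) fun i _ hi => hmono ?_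
  exact Fin.mk_le_of_le_val (not_lt.mp hi)

/-- If the first μ squared gradient components sum to at most ε and the
(μ+1)st squared component is at least 2ε, then the Rayleigh quotient of the
diagonal matrix A = diag(λ₁,...,λₙ), 1 = λ₁ ≤ ... ≤ λₙ, at g is at least (2/3)λ_{μ+1}. -/
theorem rayleigh_lower_bound {n : ℕ} (lam : Fin n → ℝ)
    (hmono : Monotone lam) (hn : 0 < n) (h1 : lam ⟨0, hn⟩ = 1)
    (g : Fin n → ℝ) (μ : ℕ) (hμ1 : 1 ≤ μ) (hμn : μ < n) (ε : ℝ) (hε : 0 < ε)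
    (hsum : ∑ i ∈ Finset.univ.filter (fun i : Fin n => (i : ℕ) < μ), g i ^ 2 ≤ ε)
    (hbig : g ⟨μ, hμn⟩ ^ 2 ≥ 2 * ε) :
    (g ⬝ᵥ (Matrix.diagonal lam).mulVec g) / (g ⬝ᵥ g) ≥ 2 / 3 * lam ⟨μ, hμn⟩ :=
  rayleigh_lower_bound_general lam hmono hn h1 g μ hμn ε hε hsum hbig
end

section
/- For a 2×2 symmetric positive definite matrix A = diag(λ₁, λ₂) with λ₁ < λ₂, if at some iteration k the Yuan steplength α_k^Y is used with exact arithmetic after two steepest descent steps, then α_k^Y equals either 1/λ₁ or 1/λ₂, and consequently the subsequent steepest descent step with steplength equal to the inverse of the remaining eigenvalue gives zero gradient: the method terminates finitely. -/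
open Matrix

set_option maxHeartbeats 1000000

/-- Two-dimensional finite termination: for A = diag(λ₁, λ₂) with λ₁ < λ₂,
after a steepest descent step from a gradient with both components nonzero,
the Yuan steplength equals 1/λ₁ or 1/λ₂, and taking it followed by a step
with the inverse of the remaining eigenvalue kills the gradient. -/
theorem yuan_two_dim_finite_termination (l1 l2 : ℝ) (h1 : 0 < l1) (h12 : l1 < l2)
    (b xkm1 : Fin 2 → ℝ)
    (A : Matrix (Fin 2) (Fin 2) ℝ) (hA : A = Matrix.diagonal ![l1, l2])
    (gkm1 : Fin 2 → ℝ) (hgkm1 : gkm1 = A.mulVec xkm1 - b)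
    (h0 : gkm1 0 ≠ 0) (h1' : gkm1 1 ≠ 0)
    (aSDkm1 : ℝ) (hSDkm1 : aSDkm1 = (gkm1 ⬝ᵥ gkm1) / (gkm1 ⬝ᵥ A.mulVec gkm1))
    (xk : Fin 2 → ℝ) (hxk : xk = xkm1 - aSDkm1 • gkm1)
    (gk : Fin 2 → ℝ) (hgk : gk = A.mulVec xk - b)
    (s : Fin 2 → ℝ) (hs : s = xk - xkm1)
    (aSDk : ℝ) (hSDk : aSDk = (gk ⬝ᵥ gk) / (gk ⬝ᵥ A.mulVec gk))
    (aY : ℝ)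
    (hY : aY = 2 / (Real.sqrt ((1 / aSDkm1 - 1 / aSDk) ^ 2 +
        4 * (gk ⬝ᵥ gk) / (s ⬝ᵥ s)) + 1 / aSDkm1 + 1 / aSDk))
    (x' g' : Fin 2 → ℝ) (hx' : x' = xk - aY • gk) (hg' : g' = A.mulVec x' - b) :
    (aY = 1 / l1 ∨ aY = 1 / l2) ∧
    (aY = 1 / l1 → A.mulVec (x' - (1 / l2) • g') - b = 0) ∧
    (aY = 1 / l2 → A.mulVec (x' - (1 / l1) • g') - b = 0) := by
  have hl2 : (0:ℝ) < l2 := h1.trans h12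
  have hAapp : ∀ (w : Fin 2 → ℝ) (i : Fin 2), A.mulVec w i = ![l1,l2] i * w i := by
    intro w i; rw [hA]; simp [Matrix.mulVec_diagonal]
  have hdot : ∀ x y : Fin 2 → ℝ, x ⬝ᵥ y = x 0 * y 0 + x 1 * y 1 := by
    intro x y; simp [dotProduct, Fin.sum_univ_two]
  set u := gkm1 0 with hu
  set v := gkm1 1 with hv
  have hS : (0:ℝ) < u^2 + v^2 := by positivity
  have hD : (0:ℝ) < l1*u^2 + l2*v^2 := by positivity
  have hE : (0:ℝ) < l1*v^2 + l2*u^2 := by positivity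
  have hl21 : (0:ℝ) < l2 - l1 := sub_pos.mpr h12
  -- gkm1 components in terms of x
  have hg0 : u = l1 * xkm1 0 - b 0 := by
    rw [hu, hgkm1]; simp [hAapp, hA]
  have hg1 : v = l2 * xkm1 1 - b 1 := by
    rw [hv, hgkm1]; simp [hAapp, hA]
  -- aSDkm1 value
  have ha : aSDkm1 = (u^2 + v^2) / (l1*u^2 + l2*v^2) := by
    rw [hSDkm1, hdot, hdot, hAapp, hAapp]
    simp only [Matrix.cons_val_zero, Matrix.cons_val_one, Matrix.head_cons]
    rw [← hu, ← hv]
    ring_nf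
  -- gk components
  have e0 : gk 0 = u - aSDkm1 * (l1 * u) := by
    have : gk 0 = l1 * xk 0 - b 0 := by rw [hgk]; simp [hAapp, hA]
    rw [this, hxk]; simp only [Pi.sub_apply, Pi.smul_apply, smul_eq_mul]
    rw [← hu] ; nlinarith [hg0]
  have e1 : gk 1 = v - aSDkm1 * (l2 * v) := by
    have : gk 1 = l2 * xk 1 - b 1 := by rw [hgk]; simp [hAapp, hA]
    rw [this, hxk]; simp only [Pi.sub_apply, Pi.smul_apply, smul_eq_mul]
    rw [← hv] ; nlinarith [hg1]
  have hw0 : gk 0 = (l2 - l1) * v^2 * u / (l1*u^2 + l2*v^2) := by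
    rw [e0, ha]; field_simp; ring
  have hw1 : gk 1 = -((l2 - l1) * u^2 * v) / (l1*u^2 + l2*v^2) := by
    rw [e1, ha]; field_simp; ring
  -- dot products
  have hgkgk : gk ⬝ᵥ gk = (l2-l1)^2 * u^2 * v^2 * (u^2+v^2) / (l1*u^2 + l2*v^2)^2 := by
    rw [hdot, hw0, hw1]; field_simp; ring
  have hgAg : gk ⬝ᵥ A.mulVec gk
      = (l2-l1)^2 * u^2 * v^2 * (l1*v^2 + l2*u^2) / (l1*u^2 + l2*v^2)^2 := by
    rw [hdot, hAapp, hAapp, hw0, hw1]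
    simp only [Matrix.cons_val_zero, Matrix.cons_val_one, Matrix.head_cons]
    field_simp
  have hss : s ⬝ᵥ s = (u^2+v^2)^3 / (l1*u^2 + l2*v^2)^2 := by
    have hsi : ∀ i, s i = -(aSDkm1 * gkm1 i) := by
      intro i; rw [hs, hxk]; simp
    rw [hdot, hsi 0, hsi 1, ← hu, ← hv, ha]; field_simp
  -- inverse steplengths
  have hinv1 : 1/aSDkm1 = (l1*u^2 + l2*v^2) / (u^2+v^2) := by
    rw [ha, one_div_div]
  have hak : aSDk = (u^2+v^2) / (l1*v^2 + l2*u^2) := by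
    rw [hSDk, hgkgk, hgAg, div_eq_div_iff (by positivity) hE.ne']
    field_simp
  have hinvk : 1/aSDk = (l1*v^2 + l2*u^2) / (u^2+v^2) := by
    rw [hak, one_div_div]
  have harg : (1/aSDkm1 - 1/aSDk)^2 + 4 * (gk ⬝ᵥ gk) / (s ⬝ᵥ s) = (l2-l1)^2 := by
    rw [hinv1, hinvk, hgkgk, hss]
    field_simp
    ring
  have hsum : Real.sqrt ((1 / aSDkm1 - 1 / aSDk) ^ 2 + 4 * (gk ⬝ᵥ gk) / (s ⬝ᵥ s))
      + 1/aSDkm1 + 1/aSDk = 2 * l2 := by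
    rw [harg, Real.sqrt_sq hl21.le, hinv1, hinvk]
    field_simp; ring
  have haY : aY = 1 / l2 := by
    rw [hY, hsum]
    rw [div_eq_div_iff (by positivity) (ne_of_gt hl2)]
    ring
  have hgi0 : g' 0 = l1 * x' 0 - b 0 := by rw [hg']; simp [hAapp, hA]
  have hgi1 : g' 1 = l2 * x' 1 - b 1 := by rw [hg']; simp [hAapp, hA]
  have f1 : g' 1 = 0 := by
    have hgk1 : gk 1 = l2 * xk 1 - b 1 := by rw [hgk]; simp [hAapp, hA]
    have hx1 : x' 1 = xk 1 - aY * gk 1 := by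
      rw [hx']; simp
    rw [hgi1, hx1, haY, hgk1]
    field_simp
    ring
  refine ⟨Or.inr haY, ?_, ?_⟩
  · intro h
    exfalso
    rw [haY] at h
    have : l1 = l2 := by
      field_simp at h; linarith
    linarith
  · intro _
    have c0 : (A.mulVec (x' - (1 / l1) • g') - b) 0 = 0 := by
      rw [Pi.sub_apply, hAapp]
      simp only [Matrix.cons_val_zero, Pi.sub_apply, Pi.smul_apply, smul_eq_mul]
      rw [hgi0]
      field_simp
      ring
    have c1 : (A.mulVec (x' - (1 / l1) • g') - b) 1 = 0 := by
      rw [Pi.sub_apply, hAapp]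
      simp only [Matrix.cons_val_one, Matrix.cons_val_zero, Matrix.head_cons, Pi.sub_apply, Pi.smul_apply, smul_eq_mul]
      rw [f1]
      have h := hgi1
      rw [f1] at h
      linarith
    funext i
    fin_cases i
    · exact c0
    · exact c1
end

section
/- In dimension 2 with A = diag(λ₁, λ₂), λ₁ < λ₂, and g_k with both components nonzero, the Yuan steplength computed from two consecutive steepest descent iterations satisfies: 1/α_k^Y and a + b − 1/α_k^Y (with a = 1/α_{k-1}^SD, b = 1/α_k^SD) are exactly λ₂ and λ₁ respectively. -/
open Matrix

/-- In 2D with A = diag(λ₁, λ₂), λ₁ < λ₂, and both components of the gradient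
nonzero, the Yuan steplength computed from two consecutive steepest descent
iterations satisfies 1/α_k^Y = λ₂ and a + b − 1/α_k^Y = λ₁
(with a = 1/α_{k-1}^SD, b = 1/α_k^SD). -/
theorem yuan_two_dim_eigenvalues (l1 l2 : ℝ) (h1 : 0 < l1) (h12 : l1 < l2)
    (b xkm1 : Fin 2 → ℝ)
    (A : Matrix (Fin 2) (Fin 2) ℝ) (hA : A = Matrix.diagonal ![l1, l2])
    (gkm1 : Fin 2 → ℝ) (hgkm1 : gkm1 = A.mulVec xkm1 - b)
    (h0 : gkm1 0 ≠ 0) (h1' : gkm1 1 ≠ 0)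
    (aSDkm1 : ℝ) (hSDkm1 : aSDkm1 = (gkm1 ⬝ᵥ gkm1) / (gkm1 ⬝ᵥ A.mulVec gkm1))
    (xk : Fin 2 → ℝ) (hxk : xk = xkm1 - aSDkm1 • gkm1)
    (gk : Fin 2 → ℝ) (hgk : gk = A.mulVec xk - b)
    (s : Fin 2 → ℝ) (hs : s = xk - xkm1)
    (aSDk : ℝ) (hSDk : aSDk = (gk ⬝ᵥ gk) / (gk ⬝ᵥ A.mulVec gk))
    (aY : ℝ)
    (hY : aY = 2 / (Real.sqrt ((1 / aSDkm1 - 1 / aSDk) ^ 2 +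
        4 * (gk ⬝ᵥ gk) / (s ⬝ᵥ s)) + 1 / aSDkm1 + 1 / aSDk)) :
    1 / aY = l2 ∧ 1 / aSDkm1 + 1 / aSDk - 1 / aY = l1 := by
  set u := gkm1 0 with hu
  set v := gkm1 1 with hv
  have hu2 : (0:ℝ) < u ^ 2 := pow_two_pos_of_ne_zero h0
  have hv2 : (0:ℝ) < v ^ 2 := pow_two_pos_of_ne_zero h1'
  have hd : (0:ℝ) < l2 - l1 := by linarith
  have hPpos : 0 < u ^ 2 + v ^ 2 := by positivity
  have hQpos : 0 < l1 * u ^ 2 + l2 * v ^ 2 := by nlinarith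
  have hQ'pos : 0 < l2 * u ^ 2 + l1 * v ^ 2 := by nlinarith
  have hb0 : b 0 = l1 * xkm1 0 - u := by
    rw [hu, hgkm1, hA]; simp [mulVec_diagonal]
  have hb1 : b 1 = l2 * xkm1 1 - v := by
    rw [hv, hgkm1, hA]; simp [mulVec_diagonal]
  have hα : aSDkm1 = (u ^ 2 + v ^ 2) / (l1 * u ^ 2 + l2 * v ^ 2) := by
    rw [hSDkm1, hA]
    simp [dotProduct, Fin.sum_univ_two, mulVec_diagonal, ← hu, ← hv]
    ring_nf
  have hgk0 : gk 0 = u * v ^ 2 * (l2 - l1) / (l1 * u ^ 2 + l2 * v ^ 2) := by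
    rw [hgk, hxk, hA]
    simp only [mulVec_diagonal, Pi.sub_apply, Pi.smul_apply, smul_eq_mul]
    simp only [Matrix.cons_val_zero]
    rw [hb0, ← hu, hα]
    have hQne : (l1 * u ^ 2 + l2 * v ^ 2) ≠ 0 := ne_of_gt hQpos
    linear_combination (-u) * mul_inv_cancel₀ hQne
  have hgk1 : gk 1 = -(u ^ 2 * v * (l2 - l1)) / (l1 * u ^ 2 + l2 * v ^ 2) := by
    rw [hgk, hxk, hA]
    simp only [mulVec_diagonal, Pi.sub_apply, Pi.smul_apply, smul_eq_mul]
    simp only [Matrix.cons_val_one, Matrix.head_cons, Matrix.cons_val_zero]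
    rw [hb1, ← hv, hα]
    have hQne : (l1 * u ^ 2 + l2 * v ^ 2) ≠ 0 := ne_of_gt hQpos
    linear_combination (-v) * mul_inv_cancel₀ hQne
  have hgkgk : gk ⬝ᵥ gk =
      (l2 - l1) ^ 2 * u ^ 2 * v ^ 2 * (u ^ 2 + v ^ 2) / (l1 * u ^ 2 + l2 * v ^ 2) ^ 2 := by
    simp only [dotProduct, Fin.sum_univ_two, hgk0, hgk1]
    field_simp
    ring
  have hgkAgk : gk ⬝ᵥ A.mulVec gk =
      (l2 - l1) ^ 2 * u ^ 2 * v ^ 2 * (l2 * u ^ 2 + l1 * v ^ 2) / (l1 * u ^ 2 + l2 * v ^ 2) ^ 2 := by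
    rw [hA]
    simp only [dotProduct, Fin.sum_univ_two, mulVec_diagonal, hgk0, hgk1,
      Matrix.cons_val_zero, Matrix.cons_val_one, Matrix.head_cons]
    field_simp
    ring
  have hβ : aSDk = (u ^ 2 + v ^ 2) / (l2 * u ^ 2 + l1 * v ^ 2) := by
    have hQne : (l1 * u ^ 2 + l2 * v ^ 2) ≠ 0 := ne_of_gt hQpos
    have hQ'ne : (l2 * u ^ 2 + l1 * v ^ 2) ≠ 0 := ne_of_gt hQ'pos
    have hdne : l2 - l1 ≠ 0 := ne_of_gt hd
    rw [hSDk, hgkgk, hgkAgk]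
    field_simp
  have hss : s ⬝ᵥ s = (u ^ 2 + v ^ 2) ^ 3 / (l1 * u ^ 2 + l2 * v ^ 2) ^ 2 := by
    rw [hs, hxk]
    simp only [dotProduct, Fin.sum_univ_two, Pi.sub_apply, Pi.smul_apply, smul_eq_mul,
      ← hu, ← hv, hα]
    have hQne : (l1 * u ^ 2 + l2 * v ^ 2) ≠ 0 := ne_of_gt hQpos
    rw [eq_div_iff (pow_ne_zero 2 hQne)]
    linear_combination (u ^ 2 + v ^ 2) ^ 3 * ((l1 * u ^ 2 + l2 * v ^ 2) * (l1 * u ^ 2 + l2 * v ^ 2)⁻¹ + 1) * mul_inv_cancel₀ hQne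
  have hia : 1 / aSDkm1 = (l1 * u ^ 2 + l2 * v ^ 2) / (u ^ 2 + v ^ 2) := by
    rw [hα, one_div_div]
  have hib : 1 / aSDk = (l2 * u ^ 2 + l1 * v ^ 2) / (u ^ 2 + v ^ 2) := by
    rw [hβ, one_div_div]
  have hsum : 1 / aSDkm1 + 1 / aSDk = l1 + l2 := by
    rw [hia, hib]; field_simp; ring
  have harg : (1 / aSDkm1 - 1 / aSDk) ^ 2 + 4 * (gk ⬝ᵥ gk) / (s ⬝ᵥ s) = (l2 - l1) ^ 2 := by
    rw [hia, hib, hgkgk, hss]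
    field_simp
    ring
  have hsqrt : Real.sqrt ((1 / aSDkm1 - 1 / aSDk) ^ 2 + 4 * (gk ⬝ᵥ gk) / (s ⬝ᵥ s)) = l2 - l1 := by
    rw [harg, Real.sqrt_sq hd.le]
  have haY : aY = 1 / l2 := by
    rw [hY, hsqrt]
    have hl2 : (0:ℝ) < l2 := h1.trans h12
    rw [show l2 - l1 + 1 / aSDkm1 + 1 / aSDk = l2 - l1 + (1 / aSDkm1 + 1 / aSDk) by ring,
      hsum, show l2 - l1 + (l1 + l2) = 2 * l2 by ring]
    rw [div_eq_div_iff (by linarith) (ne_of_gt hl2)]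
    ring
  refine ⟨by rw [haY, one_div_one_div], ?_⟩
  rw [haY, one_div_one_div, hsum]; ring
end
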